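/- Let G = GL_c(ℂ) act on the space 𝔹 = End(ℂ^c)^{⊕n} ⊕ (ℂ^c)^{⊕r} by g·(B₀,…,B_{n-1},v₁,…,v_r) = (gB₀g⁻¹,…,gB_{n-1}g⁻¹,gv₁,…,gv_r), and lift it to 𝔹 × ℂ via g·(X,z) = (g·X, det(g)^{−ℓ} z) for a fixed ℓ > 0. If X is a stable datum satisfying the commutation relations, then for any z ≠ 0 the orbit G·(X,z) is closed in 𝒰(n,c,r) × ℂ. -/

import Mathlib

/-!
Let `gₖ · (X, z)` converge. The vectors `u` for which `gₖ u` converges form a subspace, which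
contains every `vⱼ` and is stable under every `Bᵢ` because `gₖ Bᵢ u = (gₖ Bᵢ gₖ⁻¹)(gₖ u)`; by
stability it is everything, so `gₖ → A` for some matrix `A`. Passing to the limit in
`det(gₖ)^ℓ · (det(gₖ)^{-ℓ} z) = z ≠ 0` shows `det A ≠ 0`, hence `gₖ⁻¹ → A⁻¹` and the limit is
`A · (X, z)`.
-/

open Filter Topology Matrix Set

theorem isClosed_range_of_forall_tendsto {α X : Type*} [TopologicalSpace X] {f : α → X}
    (h : ∀ (l : Filter α) [l.NeBot] (x : X), Tendsto f l (𝓝 x) → x ∈ range f) :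
    IsClosed (range f) := by
  refine isClosed_of_closure_subset fun x hx => ?_
  have : (comap f (𝓝 x)).NeBot := comap_neBot fun t ht => by
    obtain ⟨_, hxt, a, rfl⟩ := mem_closure_iff_nhds.mp hx t ht
    exact ⟨a, hxt⟩
  exact h _ x tendsto_comap

theorem Filter.Tendsto.matrix_mulVec {α m n R : Type*} [Fintype n]
    [NonUnitalNonAssocSemiring R] [TopologicalSpace R] [ContinuousAdd R] [ContinuousMul R]
    {l : Filter α} {M : α → Matrix m n R} {u : α → n → R} {A : Matrix m n R} {w : n → R}
    (hM : Tendsto M l (𝓝 A)) (hu : Tendsto u l (𝓝 w)) :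
    Tendsto (fun a => M a *ᵥ u a) l (𝓝 (A *ᵥ w)) := by
  have hcont : Continuous fun p : Matrix m n R × (n → R) => p.1 *ᵥ p.2 :=
    continuous_fst.matrix_mulVec continuous_snd
  exact (hcont.tendsto _).comp (hM.prodMk_nhds hu)

section ConvergenceSubmodule

variable {α R E F : Type*} [Semiring R] [AddCommMonoid E] [Module R E] [AddCommMonoid F]
  [Module R F] [TopologicalSpace F] [ContinuousAdd F] [ContinuousConstSMul R F]

def convergenceSubmodule (f : α → E →ₗ[R] F) (l : Filter α) : Submodule R E where
  carrier := {u | ∃ L, Tendsto (fun a => f a u) l (𝓝 L)}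
  add_mem' := by
    rintro u w ⟨L, hL⟩ ⟨L', hL'⟩
    exact ⟨L + L', by simpa only [map_add] using hL.add hL'⟩
  zero_mem' := ⟨0, by simpa only [map_zero] using tendsto_const_nhds⟩
  smul_mem' := by
    rintro a u ⟨L, hL⟩
    exact ⟨a • L, by simpa only [map_smul] using hL.const_smul a⟩

theorem mem_convergenceSubmodule {f : α → E →ₗ[R] F} {l : Filter α} {u : E} :
    u ∈ convergenceSubmodule f l ↔ ∃ L, Tendsto (fun a => f a u) l (𝓝 L) :=
  Iff.rfl

end ConvergenceSubmodule

namespace Matrix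

variable {m : Type*} [Fintype m] [DecidableEq m]

theorem exists_tendsto_of_forall_exists_tendsto_mulVec {α n R : Type*} [NonAssocSemiring R]
    [TopologicalSpace R] {l : Filter α} {M : α → Matrix n m R}
    (h : ∀ u, ∃ L, Tendsto (fun a => M a *ᵥ u) l (𝓝 L)) : ∃ A, Tendsto M l (𝓝 A) := by
  choose col hcol using fun j : m => h (Pi.single j 1)
  refine ⟨of fun i j => col j i, tendsto_pi_nhds.mpr fun i => tendsto_pi_nhds.mpr fun j => ?_⟩
  simpa only [mulVec_single_one, col_apply, of_apply] using tendsto_pi_nhds.mp (hcol j) i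

theorem det_pow_mul_eq_of_tendsto {R : Type*} [CommRing R] [TopologicalSpace R]
    [IsTopologicalRing R] [T2Space R] {l : Filter (GL m R)} [l.NeBot] {A : Matrix m m R}
    {ℓ : ℕ} {z w : R} (hA : Tendsto (fun g : GL m R => (g : Matrix m m R)) l (𝓝 A))
    (hw : Tendsto (fun g : GL m R => (↑g⁻¹ : Matrix m m R).det ^ ℓ * z) l (𝓝 w)) :
    A.det ^ ℓ * w = z := by
  have hconst (g : GL m R) :
      (g : Matrix m m R).det ^ ℓ * ((↑g⁻¹ : Matrix m m R).det ^ ℓ * z) = z := by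
    rw [← mul_assoc, ← mul_pow, ← det_mul, Units.mul_inv, det_one, one_pow, one_mul]
  have hdet := (continuous_id.matrix_det.tendsto A).comp hA
  exact tendsto_nhds_unique ((hdet.pow ℓ).mul hw)
    (tendsto_const_nhds.congr fun g => (hconst g).symm)

theorem tendsto_coe_units_inv {𝕜 : Type*} [Field 𝕜] [TopologicalSpace 𝕜]
    [IsTopologicalDivisionRing 𝕜] {l : Filter (GL m 𝕜)} {A : Matrix m m 𝕜}
    (hA : Tendsto (fun g : GL m 𝕜 => (g : Matrix m m 𝕜)) l (𝓝 A)) (hdet : A.det ≠ 0) :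
    Tendsto (fun g : GL m 𝕜 => (↑g⁻¹ : Matrix m m 𝕜)) l (𝓝 A⁻¹) := by
  have hinv : ContinuousAt Inv.inv A :=
    continuousAt_matrix_inv A (by rw [Ring.inverse_eq_inv']; exact continuousAt_inv₀ hdet)
  exact (hinv.tendsto.comp hA).congr fun g => (coe_units_inv g).symm

end Matrix

section Stability

variable {ι κ m : Type*} [Fintype m] [DecidableEq m]

def IsStableDatum {R : Type*} [Semiring R] (B : ι → Matrix m m R) (v : κ → m → R) : Prop :=
  ∀ S : Submodule R (m → R), (∀ i, ∀ x ∈ S, B i *ᵥ x ∈ S) → (∀ j, v j ∈ S) → S = ⊤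

theorem IsStableDatum.exists_tendsto_coe_units {R : Type*} [CommRing R] [TopologicalSpace R]
    [IsTopologicalRing R] {B : ι → Matrix m m R} {v : κ → m → R} (hs : IsStableDatum B v)
    {l : Filter (GL m R)}
    (hB : ∀ i, ∃ L, Tendsto (fun g : GL m R => (g : Matrix m m R) * B i * (↑g⁻¹ : Matrix m m R))
      l (𝓝 L))
    (hv : ∀ j, ∃ L, Tendsto (fun g : GL m R => (g : Matrix m m R) *ᵥ v j) l (𝓝 L)) :
    ∃ A, Tendsto (fun g : GL m R => (g : Matrix m m R)) l (𝓝 A) := by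
  have htop : convergenceSubmodule (fun g : GL m R => (g : Matrix m m R).mulVecLin) l = ⊤ := by
    refine hs _ (fun i u hu => ?_) hv
    obtain ⟨L, hL⟩ := hB i
    obtain ⟨L', hL'⟩ := mem_convergenceSubmodule.mp hu
    refine ⟨L *ᵥ L', (hL.matrix_mulVec hL').congr fun g => ?_⟩
    simp [mulVec_mulVec, mul_assoc]
  exact exists_tendsto_of_forall_exists_tendsto_mulVec fun u =>
    mem_convergenceSubmodule.mp (Submodule.eq_top_iff'.mp htop u)

theorem IsStableDatum.isClosed_orbit {𝕜 : Type*} [Field 𝕜] [TopologicalSpace 𝕜]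
    [IsTopologicalDivisionRing 𝕜] [T2Space 𝕜]
    {B : ι → Matrix m m 𝕜} {v : κ → m → 𝕜} (hs : IsStableDatum B v)
    {ℓ : ℕ} (hℓ : 0 < ℓ) {z : 𝕜} (hz : z ≠ 0) :
    IsClosed {p : ((ι → Matrix m m 𝕜) × (κ → m → 𝕜)) × 𝕜 | ∃ g : GL m 𝕜,
      p = (((fun i => (g : Matrix m m 𝕜) * B i * (↑g⁻¹ : Matrix m m 𝕜)),
        fun j => (g : Matrix m m 𝕜) *ᵥ v j), (↑g⁻¹ : Matrix m m 𝕜).det ^ ℓ * z)} := by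
  set φ : Matrix m m 𝕜 × Matrix m m 𝕜 → ((ι → Matrix m m 𝕜) × (κ → m → 𝕜)) × 𝕜 :=
    fun q => (((fun i => q.1 * B i * q.2), fun j => q.1 *ᵥ v j), q.2.det ^ ℓ * z)
  have hφ : Continuous φ := by fun_prop
  have horbit : {p | ∃ g : GL m 𝕜, p = φ (g, ↑g⁻¹)} = range fun g : GL m 𝕜 => φ (g, ↑g⁻¹) :=
    ext fun _ => exists_congr fun _ => eq_comm
  refine horbit ▸ isClosed_range_of_forall_tendsto fun l _ p hp => ?_
  obtain ⟨A, hA⟩ := hs.exists_tendsto_coe_units (fun i => ⟨_, hp.fst_nhds.fst_nhds.apply_nhds i⟩)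
    (fun j => ⟨_, hp.fst_nhds.snd_nhds.apply_nhds j⟩)
  have hdet := det_pow_mul_eq_of_tendsto hA hp.snd_nhds
  have hA0 : A.det ≠ 0 := fun h => hz (by rw [← hdet, h, zero_pow hℓ.ne', zero_mul])
  refine ⟨nonsingInvUnit A (isUnit_iff_ne_zero.mpr hA0), tendsto_nhds_unique ?_ hp⟩
  exact (hφ.tendsto (A, A⁻¹)).comp (hA.prodMk_nhds (tendsto_coe_units_inv hA hA0))

end Stability

theorem stmt18_general (n c r ℓ : ℕ) (hℓ : 0 < ℓ)
    (B : Fin n → Matrix (Fin c) (Fin c) ℂ) (v : Fin r → Fin c → ℂ) (z : ℂ) (hz : z ≠ 0)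
    (hstab : ∀ S : Submodule ℂ (Fin c → ℂ),
      (∀ i, ∀ x ∈ S, (B i).mulVec x ∈ S) → (∀ j, v j ∈ S) → S = ⊤) :
    IsClosed {q : {p : ((Fin n → Matrix (Fin c) (Fin c) ℂ) × (Fin r → Fin c → ℂ)) × ℂ //
        ∀ i j, Commute (p.1.1 i) (p.1.1 j)} |
      ∃ g : GL (Fin c) ℂ,
        (q : ((Fin n → Matrix (Fin c) (Fin c) ℂ) × (Fin r → Fin c → ℂ)) × ℂ) =
          (((fun i => (g : Matrix (Fin c) (Fin c) ℂ) * B i * ((↑g⁻¹ : Matrix (Fin c) (Fin c) ℂ))),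
            fun j => (g : Matrix (Fin c) (Fin c) ℂ).mulVec (v j)),
           ((↑g⁻¹ : Matrix (Fin c) (Fin c) ℂ).det) ^ ℓ * z)} :=
  (IsStableDatum.isClosed_orbit hstab hℓ hz).preimage continuous_subtype_val

/-- For a stable commuting ADHM datum `X` and any `z ≠ 0`, the `GL_c(ℂ)`-orbit of `(X, z)`
under `g·(X,z) = (g·X, det(g)^{-ℓ} z)` is closed in `𝒰(n,c,r) × ℂ`. -/
theorem stmt18 (n c r ℓ : ℕ) (hℓ : 0 < ℓ)
    (B : Fin n → Matrix (Fin c) (Fin c) ℂ) (v : Fin r → Fin c → ℂ) (z : ℂ) (hz : z ≠ 0)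
    (hcomm : ∀ i j, Commute (B i) (B j))
    (hstab : ∀ S : Submodule ℂ (Fin c → ℂ),
      (∀ i, ∀ x ∈ S, (B i).mulVec x ∈ S) → (∀ j, v j ∈ S) → S = ⊤) :
    IsClosed {q : {p : ((Fin n → Matrix (Fin c) (Fin c) ℂ) × (Fin r → Fin c → ℂ)) × ℂ //
        ∀ i j, Commute (p.1.1 i) (p.1.1 j)} |
      ∃ g : GL (Fin c) ℂ,
        (q : ((Fin n → Matrix (Fin c) (Fin c) ℂ) × (Fin r → Fin c → ℂ)) × ℂ) =
          (((fun i => (g : Matrix (Fin c) (Fin c) ℂ) * B i * ((↑g⁻¹ : Matrix (Fin c) (Fin c) ℂ))),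
            fun j => (g : Matrix (Fin c) (Fin c) ℂ).mulVec (v j)),
           ((↑g⁻¹ : Matrix (Fin c) (Fin c) ℂ).det) ^ ℓ * z)} :=
  stmt18_general n c r ℓ hℓ B v z hz hstab
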